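/- arXiv:2603.29330 — 2 statements merged into one kernel-verified Lean document; each statement's English description precedes it below -/
import Mathlib

section
/- There exists a constant C > 0 such that for all t ≥ T := √(2r²/(9μ)), f(x(t)) − f_* − ((r² − 3r)/(9t²))·‖x(t) − x_*‖² ≤ C · t^{−2r/3}. -/
open scoped RealInnerProductSpace

/-!
With `p = 2r/3`, the Lyapunov function
`E(t) = t^p (f(x) - f_* - (r² - 3r)/(9t²) ‖x - x_*‖²) + ½ t^(p-2) ‖p (x - x_*) + t ẋ‖²`
bounds `t^p` times the quantity of the theorem from above. Along the ODE the cross terms in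
`⟪x - x_*, ẋ⟫` and `‖ẋ‖²` cancel in `Ė`, which leaves
`Ė = t^(p-3) (p t² (f(x) - f_* - ⟪x - x_*, ∇f(x)⟫) + 2r(r² - 9)/27 ‖x - x_*‖²)`.
Strong convexity bounds the first bracket by `-(μ/2)‖x - x_*‖²`, so `Ė ≤ 0` as soon as
`9μt² ≥ 2r²`, i.e. for `t ≥ T`. Hence `t^p (…) ≤ E(t) ≤ E(T)`.
-/

open Set

section
variable {E : Type*} [NormedAddCommGroup E] [InnerProductSpace ℝ E]

theorem HasGradientAt.comp_hasDerivAt [CompleteSpace E] {f : E → ℝ} {g v : E} {γ : ℝ → E}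
    {t : ℝ} (hf : HasGradientAt f g (γ t)) (hγ : HasDerivAt γ v t) :
    HasDerivAt (fun s => f (γ s)) ⟪g, v⟫ t := by
  have := (hasGradientAt_iff_hasFDerivAt.mp hf).comp_hasDerivAt t hγ
  simpa [Function.comp_def] using this

/-- The function `E` above, expanded into monomials in `t`. -/
noncomputable def lyapunovEnergy (r : ℝ) (f : E → ℝ) (xstar : E) (x x' : ℝ → E) (t : ℝ) : ℝ :=
  t ^ (2 * r / 3) * (f (x t) - f xstar)
    + (r ^ 2 / 9 + r / 3) * t ^ (2 * r / 3 - 2) * ‖x t - xstar‖ ^ 2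
    + 2 * r / 3 * t ^ (2 * r / 3 - 1) * ⟪x t - xstar, x' t⟫
    + t ^ (2 * r / 3) / 2 * ‖x' t‖ ^ 2

variable {r t : ℝ} {f : E → ℝ} {xstar : E} {x x' : ℝ → E}

theorem rpow_mul_sub_le_lyapunovEnergy (ht : 0 < t) :
    t ^ (2 * r / 3) * (f (x t) - f xstar - (r ^ 2 - 3 * r) / (9 * t ^ 2) * ‖x t - xstar‖ ^ 2)
      ≤ lyapunovEnergy r f xstar x x' t := by
  have hsplit : lyapunovEnergy r f xstar x x' t
      - t ^ (2 * r / 3) * (f (x t) - f xstar - (r ^ 2 - 3 * r) / (9 * t ^ 2) * ‖x t - xstar‖ ^ 2)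
      = t ^ (2 * r / 3 - 2) / 2 * ‖(2 * r / 3) • (x t - xstar) + t • x' t‖ ^ 2 := by
    rw [lyapunovEnergy, norm_add_sq_real, norm_smul, norm_smul, real_inner_smul_left,
      real_inner_smul_right, Real.norm_eq_abs, Real.norm_eq_abs, mul_pow, mul_pow, sq_abs, sq_abs]
    simp only [Real.rpow_sub ht, Real.rpow_one, Real.rpow_two]
    field_simp
    ring
  rw [← sub_nonneg, hsplit]
  positivity

theorem hasDerivAt_lyapunovEnergy [CompleteSpace E] {g a : E} (ht : 0 < t)
    (hf : HasGradientAt f g (x t)) (hx : HasDerivAt x (x' t) t) (hx' : HasDerivAt x' a t)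
    (hode : a + (r / t) • x' t + g = 0) :
    HasDerivAt (lyapunovEnergy r f xstar x x')
      (t ^ (2 * r / 3 - 3) * (2 * r / 3 * t ^ 2 * (f (x t) - f xstar - ⟪x t - xstar, g⟫)
        + 2 * r * (r ^ 2 - 9) / 27 * ‖x t - xstar‖ ^ 2)) t := by
  have hu := hx.sub_const xstar
  have hP (q : ℝ) : HasDerivAt (· ^ q) (q * t ^ (q - 1)) t :=
    Real.hasDerivAt_rpow_const (Or.inl ht.ne')
  have hE := ((((hP (2 * r / 3)).mul ((hf.comp_hasDerivAt hx).sub_const (f xstar))).add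
    (((hP (2 * r / 3 - 2)).const_mul (r ^ 2 / 9 + r / 3)).mul hu.norm_sq)).add
    (((hP (2 * r / 3 - 1)).const_mul (2 * r / 3)).mul (hu.inner ℝ hx'))).add
    (((hP (2 * r / 3)).div_const 2).mul hx'.norm_sq)
  refine hE.congr_deriv ?_
  rw [show a = -((r / t) • x' t) - g by rw [← sub_eq_zero, ← hode]; abel]
  simp only [inner_sub_right, inner_neg_right, real_inner_smul_right, real_inner_self_eq_norm_sq,
    real_inner_comm g]
  simp only [Real.rpow_sub ht, Real.rpow_one, Real.rpow_ofNat]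
  field_simp
  ring

theorem antitoneOn_lyapunovEnergy [CompleteSpace E] {μ T : ℝ} {f' : E → E} {x'' : ℝ → E}
    (hr : 0 ≤ r) (hT : 0 < T) (hTμ : 2 * r ^ 2 ≤ 9 * μ * T ^ 2)
    (hf' : ∀ p, HasGradientAt f (f' p) p)
    (hsc : ∀ p, f xstar ≥ f p + ⟪f' p, xstar - p⟫ + μ / 2 * ‖xstar - p‖ ^ 2)
    (hx : ∀ t > 0, HasDerivAt x (x' t) t) (hx' : ∀ t > 0, HasDerivAt x' (x'' t) t)
    (hode : ∀ t > 0, x'' t + (r / t) • x' t + f' (x t) = 0) :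
    AntitoneOn (lyapunovEnergy r f xstar x x') (Ici T) := by
  have hE (t : ℝ) (ht : 0 < t) :=
    hasDerivAt_lyapunovEnergy (xstar := xstar) ht (hf' (x t)) (hx t ht) (hx' t ht) (hode t ht)
  refine antitoneOn_of_hasDerivWithinAt_nonpos (convex_Ici T)
    (fun t ht => (hE t (hT.trans_le ht)).continuousAt.continuousWithinAt)
    (fun t ht => (hE t (hT.trans (by simpa using ht))).hasDerivWithinAt) ?_
  rintro t ht
  rw [interior_Ici] at ht
  have ht0 : 0 < t := hT.trans ht
  have hgap : f (x t) - f xstar - ⟪x t - xstar, f' (x t)⟫ ≤ -(μ / 2) * ‖x t - xstar‖ ^ 2 := by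
    have h := hsc (x t)
    rw [← neg_sub, inner_neg_right, norm_neg, real_inner_comm] at h
    linarith
  have hμ : 0 ≤ μ := by nlinarith [pow_pos hT 2]
  have hμt : 2 * r ^ 2 ≤ 9 * μ * t ^ 2 := by
    nlinarith [mul_le_mul_of_nonneg_left (pow_le_pow_left₀ hT.le ht.le 2) hμ]
  have hrN : 0 ≤ r * ‖x t - xstar‖ ^ 2 := by positivity
  refine mul_nonpos_of_nonneg_of_nonpos (Real.rpow_pos_of_pos ht0 _).le ?_
  nlinarith [mul_le_mul_of_nonneg_left hgap (by positivity : 0 ≤ 2 * r / 3 * t ^ 2),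
    mul_le_mul_of_nonneg_right hμt hrN]

end

theorem stmt_3_general
{n : ℕ} (μ r : ℝ) (hμ : 0 < μ) (hr : 0 < r)
    (f : EuclideanSpace ℝ (Fin n) → ℝ)
    (f' : EuclideanSpace ℝ (Fin n) → EuclideanSpace ℝ (Fin n))
    (hf' : ∀ p, HasGradientAt f (f' p) p)
    (hsc : ∀ p q, f q ≥ f p + ⟪f' p, q - p⟫ + μ / 2 * ‖q - p‖ ^ 2)
    (xstar : EuclideanSpace ℝ (Fin n))
    (x x' x'' : ℝ → EuclideanSpace ℝ (Fin n))
    (hx : ∀ t > (0:ℝ), HasDerivAt x (x' t) t)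
    (hx' : ∀ t > (0:ℝ), HasDerivAt x' (x'' t) t)
    (hode : ∀ t > (0:ℝ), x'' t + (r / t) • x' t + f' (x t) = 0) :
    ∃ C > (0:ℝ), ∀ t, Real.sqrt (2 * r ^ 2 / (9 * μ)) ≤ t →
      f (x t) - f xstar - (r ^ 2 - 3 * r) / (9 * t ^ 2) * ‖x t - xstar‖ ^ 2
        ≤ C * t ^ (-(2 * r / 3)) := by
  set T := Real.sqrt (2 * r ^ 2 / (9 * μ))
  have hT : 0 < T := Real.sqrt_pos.mpr (by positivity)
  have hTμ : 2 * r ^ 2 ≤ 9 * μ * T ^ 2 := by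
    rw [Real.sq_sqrt (by positivity), mul_div_cancel₀ _ (by positivity)]
  have hanti := antitoneOn_lyapunovEnergy hr.le hT hTμ hf' (fun p => hsc p xstar) hx hx' hode
  refine ⟨max (lyapunovEnergy r f xstar x x' T) 1, by positivity, fun t hTt => ?_⟩
  have ht : 0 < t := hT.trans_le hTt
  rw [Real.rpow_neg ht.le, ← div_eq_mul_inv, le_div_iff₀ (by positivity), mul_comm]
  calc _ ≤ lyapunovEnergy r f xstar x x' t := rpow_mul_sub_le_lyapunovEnergy ht
    _ ≤ lyapunovEnergy r f xstar x x' T := hanti self_mem_Ici hTt hTt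
    _ ≤ _ := le_max_left _ _

/-- Lemma 4: for `t ≥ T := √(2r²/(9μ))`,
`f(x t) - f_* - ((r² - 3r)/(9t²)) * ‖x t - x_*‖² = O(t^(-2r/3))`. -/
theorem stmt_3
{n : ℕ} (μ r : ℝ) (hμ : 0 < μ) (hr : 0 < r)
    (f : EuclideanSpace ℝ (Fin n) → ℝ)
    (f' : EuclideanSpace ℝ (Fin n) → EuclideanSpace ℝ (Fin n))
    (hf' : ∀ p, HasGradientAt f (f' p) p)
    (hsc : ∀ p q, f q ≥ f p + ⟪f' p, q - p⟫ + μ / 2 * ‖q - p‖ ^ 2)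
    (xstar : EuclideanSpace ℝ (Fin n)) (hmin : ∀ p, f xstar ≤ f p)
    (x x' x'' : ℝ → EuclideanSpace ℝ (Fin n))
    (hx : ∀ t > (0:ℝ), HasDerivAt x (x' t) t)
    (hx' : ∀ t > (0:ℝ), HasDerivAt x' (x'' t) t)
    (hode : ∀ t > (0:ℝ), x'' t + (r / t) • x' t + f' (x t) = 0) :
    ∃ C > (0:ℝ), ∀ t, Real.sqrt (2 * r ^ 2 / (9 * μ)) ≤ t →
      f (x t) - f xstar - (r ^ 2 - 3 * r) / (9 * t ^ 2) * ‖x t - xstar‖ ^ 2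
        ≤ C * t ^ (-(2 * r / 3)) :=
  stmt_3_general μ r hμ hr f f' hf' hsc xstar x x' x'' hx hx' hode
end

section
/- There exists a constant C > 0 such that for all t ≥ T := √(2r²/(9μ)), ((r² − 3r)/(9t²))·‖x(t) − x_*‖² ≤ C · t^{−2r/3}. -/
/-!
With `v = x - x_*`, consider the energy (`lyapunov`)
`E(t) = f(x) - f_* + ½‖(2r/(3t)) v + ẋ‖² + (r(3 - r)/(9t²)) ‖v‖²`.
Along the ODE,
`d/dt (t^{2r/3} E) = t^{2r/3 - 1} ((2r/3)(f(x) - f_* - ⟪∇f(x), v⟫) + (2r(r² - 9)/(27t²)) ‖v‖²)`,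
and strong convexity bounds the first bracket by `-(μ/2) ‖v‖²`, so the derivative is nonpositive
as soon as `9μt² ≥ 2r²`, i.e. for `t ≥ T`. Hence `E(t) ≤ C t^{-2r/3}` on `[T, ∞)`. For `r > 3`,
quadratic growth `f(x) - f_* ≥ (μ/2) ‖v‖²` absorbs the negative last term of `E` and gives
`((r² - 3r)/(9t²)) ‖v‖² ≤ ((r - 3)/3) E(t)`; for `r ≤ 3` the left-hand side is nonpositive.
-/

open scoped RealInnerProductSpace

open Set

section DampedGradientFlow

variable {E : Type*} [NormedAddCommGroup E] [InnerProductSpace ℝ E]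
  {f : E → ℝ} {f' : E → E} {μ r : ℝ} {xstar : E} {x x' x'' : ℝ → E}

theorem IsLocalMin.hasGradientAt_eq_zero [CompleteSpace E] {g : E} (hmin : IsLocalMin f xstar)
    (hg : HasGradientAt f g xstar) : g = 0 :=
  (InnerProductSpace.toDual ℝ E).map_eq_zero_iff.mp (hmin.hasFDerivAt_eq_zero hg.hasFDerivAt)

theorem quadratic_growth_of_strongly_convex [CompleteSpace E]
    (hf' : HasGradientAt f (f' xstar) xstar)
    (hsc : ∀ p q, f q ≥ f p + ⟪f' p, q - p⟫ + μ / 2 * ‖q - p‖ ^ 2)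
    (hmin : ∀ p, f xstar ≤ f p) (p : E) :
    f xstar + μ / 2 * ‖p - xstar‖ ^ 2 ≤ f p := by
  have hzero : f' xstar = 0 := IsLocalMin.hasGradientAt_eq_zero (.of_forall hmin) hf'
  simpa [hzero] using hsc xstar p

noncomputable def lyapunov (f : E → ℝ) (r : ℝ) (xstar : E) (x x' : ℝ → E) (t : ℝ) : ℝ :=
  f (x t) - f xstar + ‖(2 * r / (3 * t)) • (x t - xstar) + x' t‖ ^ 2 / 2
    + r * (3 - r) / (9 * t ^ 2) * ‖x t - xstar‖ ^ 2

theorem hasDerivAt_rpow_mul_lyapunov [CompleteSpace E] {t : ℝ} (ht : 0 < t)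
    (hf' : HasGradientAt f (f' (x t)) (x t)) (hx : HasDerivAt x (x' t) t)
    (hx' : HasDerivAt x' (x'' t) t) (hode : x'' t + (r / t) • x' t + f' (x t) = 0) :
    HasDerivAt (fun s ↦ s ^ (2 * r / 3) * lyapunov f r xstar x x' s)
      (t ^ (2 * r / 3 - 1) * (2 * r / 3 * (f (x t) - f xstar - ⟪f' (x t), x t - xstar⟫)
        + 2 * r * (r ^ 2 - 9) / (27 * t ^ 2) * ‖x t - xstar‖ ^ 2)) t := by
  have hv : HasDerivAt (fun s ↦ x s - xstar) (x' t) t := hx.sub_const xstar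
  have hfx : HasDerivAt (fun s ↦ f (x s)) ⟪f' (x t), x' t⟫ t :=
    hf'.hasFDerivAt.comp_hasDerivAt t hx
  have hcoef : HasDerivAt (fun s ↦ 2 * r / (3 * s)) (-(2 * r / (3 * t ^ 2))) t := by
    rw [show (fun s : ℝ ↦ 2 * r / (3 * s)) = fun s ↦ 2 * r / 3 * s⁻¹ by ext s; ring]
    exact ((hasDerivAt_inv ht.ne').const_mul _).congr_deriv (by field_simp)
  have hcoef' : HasDerivAt (fun s ↦ r * (3 - r) / (9 * s ^ 2))
      (-(2 * r * (3 - r) / (9 * t ^ 3))) t := by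
    rw [show (fun s : ℝ ↦ r * (3 - r) / (9 * s ^ 2)) = fun s ↦ r * (3 - r) / 9 * (s ^ 2)⁻¹ by
      ext s; ring]
    exact (((hasDerivAt_pow 2 t).inv (by positivity)).const_mul _).congr_deriv
      (by field_simp; ring)
  have hw := (hcoef.smul hv).add hx'
  have hL := ((hfx.sub_const (f xstar)).add (hw.norm_sq.div_const 2)).add
    (hcoef'.mul hv.norm_sq)
  have hP := (Real.hasDerivAt_rpow_const (p := 2 * r / 3) (Or.inl ht.ne')).mul hL
  refine hP.congr_deriv ?_
  have hx'' : x'' t = -((r / t) • x' t) - f' (x t) := by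
    rw [← sub_eq_zero, ← hode]; abel
  have hrpow : t ^ (2 * r / 3) = t ^ (2 * r / 3 - 1) * t := by
    rw [← Real.rpow_add_one ht.ne']; ring_nf
  simp only [Pi.add_apply, Pi.smul_apply', Pi.mul_apply, hx'', hrpow,
    ← real_inner_self_eq_norm_sq]
  generalize x t - xstar = v
  generalize x' t = y
  generalize f' (x t) = g
  simp only [inner_add_left, inner_add_right, inner_sub_right, inner_neg_right,
    real_inner_smul_left, real_inner_smul_right, real_inner_comm y v, real_inner_comm g v,
    real_inner_comm g y]
  field_simp
  ring

theorem antitoneOn_rpow_mul_lyapunov [CompleteSpace E] {T : ℝ} (hr : 0 ≤ r) (hT : 0 < T)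
    (hTμ : 2 * r ^ 2 ≤ 9 * μ * T ^ 2) (hf' : ∀ p, HasGradientAt f (f' p) p)
    (hsc : ∀ p q, f q ≥ f p + ⟪f' p, q - p⟫ + μ / 2 * ‖q - p‖ ^ 2)
    (hx : ∀ t ≥ T, HasDerivAt x (x' t) t) (hx' : ∀ t ≥ T, HasDerivAt x' (x'' t) t)
    (hode : ∀ t ≥ T, x'' t + (r / t) • x' t + f' (x t) = 0) :
    AntitoneOn (fun t ↦ t ^ (2 * r / 3) * lyapunov f r xstar x x' t) (Ici T) := by
  have hderiv : ∀ t ≥ T, HasDerivAt (fun s ↦ s ^ (2 * r / 3) * lyapunov f r xstar x x' s) _ t :=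
    fun t ht ↦ hasDerivAt_rpow_mul_lyapunov (hT.trans_le ht) (hf' _) (hx t ht) (hx' t ht)
      (hode t ht)
  refine antitoneOn_of_hasDerivWithinAt_nonpos (convex_Ici T)
    (fun t ht ↦ (hderiv t ht).continuousAt.continuousWithinAt)
    (fun t ht ↦ (hderiv t (interior_subset ht)).hasDerivWithinAt) fun t ht ↦ ?_
  rw [interior_Ici] at ht
  have ht0 : 0 < t := hT.trans ht
  have hμ : 0 ≤ μ := by nlinarith [pow_pos hT 2]
  have htμ : 2 * r ^ 2 ≤ 9 * μ * t ^ 2 := hTμ.trans (by gcongr; exact ht.le)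
  have hgap : f (x t) - f xstar - ⟪f' (x t), x t - xstar⟫ ≤ -(μ / 2) * ‖x t - xstar‖ ^ 2 := by
    have h := hsc (x t) xstar
    rw [← neg_sub (x t) xstar, inner_neg_right, norm_neg] at h
    linarith
  have hcoef : 2 * r * (r ^ 2 - 9) / (27 * t ^ 2) ≤ r * μ / 3 := by
    rw [div_le_iff₀ (by positivity)]
    nlinarith [mul_le_mul_of_nonneg_left htμ hr]
  refine mul_nonpos_of_nonneg_of_nonpos (by positivity) ?_
  nlinarith [mul_le_mul_of_nonneg_right hcoef (sq_nonneg ‖x t - xstar‖),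
    mul_le_mul_of_nonneg_left hgap (by positivity : (0 : ℝ) ≤ 2 * r / 3)]

theorem three_mul_le_sub_three_mul_lyapunov {t : ℝ} (hr : 3 ≤ r) (ht : 0 < t)
    (htμ : 2 * r ^ 2 ≤ 9 * μ * t ^ 2)
    (hgrowth : f xstar + μ / 2 * ‖x t - xstar‖ ^ 2 ≤ f (x t)) :
    3 * ((r ^ 2 - 3 * r) / (9 * t ^ 2) * ‖x t - xstar‖ ^ 2)
      ≤ (r - 3) * lyapunov f r xstar x x' t := by
  have hcoef : r * ((r ^ 2 - 3 * r) / (9 * t ^ 2)) ≤ (r - 3) * (μ / 2) := by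
    rw [← mul_div_assoc, div_le_iff₀ (by positivity)]
    nlinarith [mul_le_mul_of_nonneg_left htμ (by linarith : (0 : ℝ) ≤ r - 3)]
  have hsign : r * (3 - r) / (9 * t ^ 2) = -((r ^ 2 - 3 * r) / (9 * t ^ 2)) := by ring
  rw [lyapunov, hsign]
  nlinarith [mul_le_mul_of_nonneg_left hgrowth (by linarith : (0 : ℝ) ≤ r - 3),
    mul_le_mul_of_nonneg_right hcoef (sq_nonneg ‖x t - xstar‖),
    mul_nonneg (by linarith : (0 : ℝ) ≤ r - 3)
      (sq_nonneg ‖(2 * r / (3 * t)) • (x t - xstar) + x' t‖)]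

end DampedGradientFlow

theorem le_mul_rpow_neg_of_antitoneOn_rpow_mul {g : ℝ → ℝ} {p T t : ℝ} (hT : 0 < T)
    (hg : AntitoneOn (fun s ↦ s ^ p * g s) (Ici T)) (ht : T ≤ t) :
    g t ≤ T ^ p * g T * t ^ (-p) := by
  have ht0 : 0 < t := hT.trans_le ht
  have hmono : t ^ p * g t ≤ T ^ p * g T := hg self_mem_Ici ht ht
  rw [Real.rpow_neg ht0.le, ← div_eq_mul_inv, le_div_iff₀ (Real.rpow_pos_of_pos ht0 p)]
  linarith

theorem two_mul_sq_le_of_sqrt_le {μ r t : ℝ} (hμ : 0 < μ) (ht : √(2 * r ^ 2 / (9 * μ)) ≤ t) :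
    2 * r ^ 2 ≤ 9 * μ * t ^ 2 := by
  have h := (Real.sqrt_le_iff.1 ht).2
  rw [div_le_iff₀ (by positivity)] at h
  linarith

theorem stmt_8_general
{n : ℕ} (μ r : ℝ) (hμ : 0 < μ) (hr : 0 < r)
    (f : EuclideanSpace ℝ (Fin n) → ℝ)
    (f' : EuclideanSpace ℝ (Fin n) → EuclideanSpace ℝ (Fin n))
    (hf' : ∀ p, HasGradientAt f (f' p) p)
    (hsc : ∀ p q, f q ≥ f p + ⟪f' p, q - p⟫ + μ / 2 * ‖q - p‖ ^ 2)
    (xstar : EuclideanSpace ℝ (Fin n)) (hmin : ∀ p, f xstar ≤ f p)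
    (x x' x'' : ℝ → EuclideanSpace ℝ (Fin n))
    (hx : ∀ t > (0:ℝ), HasDerivAt x (x' t) t)
    (hx' : ∀ t > (0:ℝ), HasDerivAt x' (x'' t) t)
    (hode : ∀ t > (0:ℝ), x'' t + (r / t) • x' t + f' (x t) = 0) :
    ∃ C > (0:ℝ), ∀ t, Real.sqrt (2 * r ^ 2 / (9 * μ)) ≤ t →
      (r ^ 2 - 3 * r) / (9 * t ^ 2) * ‖x t - xstar‖ ^ 2 ≤ C * t ^ (-(2 * r / 3)) := by
  set T := Real.sqrt (2 * r ^ 2 / (9 * μ))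
  have hT : 0 < T := Real.sqrt_pos.2 (by positivity)
  obtain hr3 | hr3 := le_or_gt r 3
  · refine ⟨1, one_pos, fun t ht ↦ ?_⟩
    have hlhs : (r ^ 2 - 3 * r) / (9 * t ^ 2) * ‖x t - xstar‖ ^ 2 ≤ 0 :=
      mul_nonpos_of_nonpos_of_nonneg (div_nonpos_of_nonpos_of_nonneg (by nlinarith)
        (by positivity)) (by positivity)
    linarith [Real.rpow_pos_of_pos (hT.trans_le ht) (-(2 * r / 3))]
  have hbound : ∀ t ≥ T, 3 * ((r ^ 2 - 3 * r) / (9 * t ^ 2) * ‖x t - xstar‖ ^ 2)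
      ≤ (r - 3) * lyapunov f r xstar x x' t := fun t ht ↦
    three_mul_le_sub_three_mul_lyapunov hr3.le (hT.trans_le ht) (two_mul_sq_le_of_sqrt_le hμ ht)
      (quadratic_growth_of_strongly_convex (hf' xstar) hsc hmin (x t))
  have hdecay : ∀ t ≥ T, lyapunov f r xstar x x' t
      ≤ T ^ (2 * r / 3) * lyapunov f r xstar x x' T * t ^ (-(2 * r / 3)) :=
    fun t ↦ le_mul_rpow_neg_of_antitoneOn_rpow_mul hT <| antitoneOn_rpow_mul_lyapunov hr.le hT
      (two_mul_sq_le_of_sqrt_le hμ le_rfl) hf' hsc (fun t ht ↦ hx t (hT.trans_le ht))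
      (fun t ht ↦ hx' t (hT.trans_le ht)) (fun t ht ↦ hode t (hT.trans_le ht))
  set C := T ^ (2 * r / 3) * lyapunov f r xstar x x' T
  refine ⟨(r - 3) / 3 * |C| + 1, by positivity, fun t ht ↦ ?_⟩
  have hpow := Real.rpow_pos_of_pos (hT.trans_le ht) (-(2 * r / 3))
  calc (r ^ 2 - 3 * r) / (9 * t ^ 2) * ‖x t - xstar‖ ^ 2
      ≤ (r - 3) / 3 * lyapunov f r xstar x x' t := by linarith [hbound t ht]
    _ ≤ (r - 3) / 3 * (|C| * t ^ (-(2 * r / 3))) := by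
      gcongr; exact (hdecay t ht).trans (by gcongr; exact le_abs_self C)
    _ ≤ ((r - 3) / 3 * |C| + 1) * t ^ (-(2 * r / 3)) := by nlinarith

/-- Lemma 5: for `t ≥ T := √(2r²/(9μ))`,
`((r² - 3r)/(9t²)) ‖x t - x_*‖² = O(t^(-2r/3))`. -/
theorem stmt_8
{n : ℕ} (μ r : ℝ) (hμ : 0 < μ) (hr : 0 < r)
    (f : EuclideanSpace ℝ (Fin n) → ℝ)
    (f' : EuclideanSpace ℝ (Fin n) → EuclideanSpace ℝ (Fin n))
    (hf' : ∀ p, HasGradientAt f (f' p) p)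
    (hsc : ∀ p q, f q ≥ f p + ⟪f' p, q - p⟫ + μ / 2 * ‖q - p‖ ^ 2)
    (xstar : EuclideanSpace ℝ (Fin n)) (hmin : ∀ p, f xstar ≤ f p)
    (x x' x'' : ℝ → EuclideanSpace ℝ (Fin n))
    (hx : ∀ t > (0:ℝ), HasDerivAt x (x' t) t)
    (hx' : ∀ t > (0:ℝ), HasDerivAt x' (x'' t) t)
    (hode : ∀ t > (0:ℝ), x'' t + (r / t) • x' t + f' (x t) = 0)
    (hx0 : ContinuousWithinAt x (Set.Ici 0) 0) :
    ∃ C > (0:ℝ), ∀ t, Real.sqrt (2 * r ^ 2 / (9 * μ)) ≤ t →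
      (r ^ 2 - 3 * r) / (9 * t ^ 2) * ‖x t - xstar‖ ^ 2 ≤ C * t ^ (-(2 * r / 3)) :=
  stmt_8_general μ r hμ hr f f' hf' hsc xstar hmin x x' x'' hx hx' hode
end
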